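/- Let L ≠ 0 and b ∈ ℝ be such that b + 3L|x| > 0 for all x in the ball B_R(0). Define ψ(x) = 1 + (1/(4L))[(b + 3L|x|)^{4/3} − b^{4/3}]. Then Δ_∞ ψ(x) = L for every x with 0 < |x| < R. -/

import Mathlib

/-!
For a radial function `u y = g ‖y‖` the gradient is `∇u y = (g' ‖y‖ / ‖y‖) • y`. Differentiating
it along the ray through `x` gives `D(∇u)(x) x = g'' ‖x‖ • x`, and since `∇u x` is a multiple of
`x`, `Δ∞ u x = g'(‖x‖)² g''(‖x‖)`. For `ψ` the profile has `g' t = (b + 3Lt)^{1/3}` and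
`g'' t = L (b + 3Lt)^{-2/3}`, so the powers cancel and `Δ∞ ψ = L`.
-/

noncomputable def infLap {n : ℕ} (u : EuclideanSpace ℝ (Fin n) → ℝ)
    (x : EuclideanSpace ℝ (Fin n)) : ℝ :=
  (inner ℝ (fderiv ℝ (gradient u) x (gradient u x)) (gradient u x) : ℝ)

open Filter Topology InnerProductSpace

section Radial

variable {F : Type*} [NormedAddCommGroup F] [InnerProductSpace ℝ F]

theorem hasFDerivAt_norm_of_ne_zero {x : F} (hx : x ≠ 0) :
    HasFDerivAt (fun y : F => ‖y‖) (‖x‖⁻¹ • innerSL ℝ x) x := by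
  have hsqrt := (hasStrictFDerivAt_norm_sq x).hasFDerivAt.sqrt (by simpa using hx)
  simp only [Real.sqrt_sq (norm_nonneg _)] at hsqrt
  convert hsqrt using 1
  ext v
  simp only [smul_apply, coe_innerSL_apply, smul_eq_mul, one_div, mul_inv_rev, nsmul_eq_mul,
    Nat.cast_ofNat]
  field_simp

variable [CompleteSpace F]

theorem HasDerivAt.hasGradientAt_comp_norm {g : ℝ → ℝ} {g' : ℝ} {x : F}
    (hg : HasDerivAt g g' ‖x‖) (hx : x ≠ 0) :
    HasGradientAt (fun y => g ‖y‖) ((g' / ‖x‖) • x) x := by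
  refine (hg.comp_hasFDerivAt x (hasFDerivAt_norm_of_ne_zero hx)).congr_fderiv ?_
  ext v
  simp [div_eq_mul_inv, mul_assoc]

theorem inner_fderiv_gradient_comp_norm {g g' : ℝ → ℝ} {g'' : ℝ} {x : F} (hx : x ≠ 0)
    (hg : ∀ᶠ t in 𝓝 ‖x‖, HasDerivAt g (g' t) t) (hg' : HasDerivAt g' g'' ‖x‖) :
    ⟪fderiv ℝ (gradient fun y => g ‖y‖) x (gradient (fun y => g ‖y‖) x),
      gradient (fun y => g ‖y‖) x⟫_ℝ = g' ‖x‖ ^ 2 * g'' := by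
  have hr : ‖x‖ ≠ 0 := norm_ne_zero_iff.2 hx
  have hgrad : gradient (fun y => g ‖y‖) =ᶠ[𝓝 x] fun y => (g' ‖y‖ / ‖y‖) • y := by
    filter_upwards [continuous_norm.continuousAt.eventually hg, eventually_ne_nhds hx]
      with y hy hy0
    exact (hy.hasGradientAt_comp_norm hy0).gradient
  have hD := ((hg'.div (hasDerivAt_id _) hr).comp_hasFDerivAt x
    (hasFDerivAt_norm_of_ne_zero hx)).smul (hasFDerivAt_id x) |>.congr_of_eventuallyEq hgrad
  have hDx : fderiv ℝ (gradient fun y => g ‖y‖) x x = g'' • x := by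
    rw [hD.fderiv]
    simp only [Function.comp_apply, Pi.div_apply, id_eq, mul_one, smul_smul, add_apply, smul_apply,
      ContinuousLinearMap.id_apply, ContinuousLinearMap.smulRight_apply, coe_innerSL_apply,
      real_inner_self_eq_norm_sq, smul_eq_mul, ← add_smul]
    congr 1
    field_simp
    ring
  rw [hgrad.eq_of_nhds, map_smul, hDx]
  simp only [real_inner_smul_left, real_inner_smul_right, real_inner_self_eq_norm_sq]
  field_simp

end Radial

theorem hasDerivAt_rpow_affine {b c t : ℝ} (p : ℝ) (ht : b + c * t ≠ 0) :
    HasDerivAt (fun s => (b + c * s) ^ p) (c * p * (b + c * t) ^ (p - 1)) t := by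
  simpa using (((hasDerivAt_id t).const_mul c).const_add b).rpow_const (Or.inl ht)

noncomputable def psiProfile (L b t : ℝ) : ℝ :=
  1 + 1 / (4 * L) * ((b + 3 * L * t) ^ ((4:ℝ)/3) - b ^ ((4:ℝ)/3))

theorem hasDerivAt_psiProfile {L b t : ℝ} (hL : L ≠ 0) (ht : b + 3 * L * t ≠ 0) :
    HasDerivAt (psiProfile L b) ((b + 3 * L * t) ^ ((1:ℝ)/3)) t := by
  refine ((((hasDerivAt_rpow_affine _ ht).sub_const _).const_mul (1 / (4 * L))).const_add 1
    ).congr_deriv ?_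
  rw [show (4:ℝ)/3 - 1 = 1/3 by norm_num]
  field_simp

theorem stmt13_general (n : ℕ) (R L b : ℝ) (hL : L ≠ 0)
    (hb : ∀ x : EuclideanSpace ℝ (Fin n), ‖x‖ < R → 0 < b + 3 * L * ‖x‖)
    (ψ : EuclideanSpace ℝ (Fin n) → ℝ)
    (hψ : ∀ x, ψ x = 1 + (1 / (4 * L)) *
      ((b + 3 * L * ‖x‖) ^ ((4:ℝ)/3) - b ^ ((4:ℝ)/3))) :
    ∀ x : EuclideanSpace ℝ (Fin n), 0 < ‖x‖ → ‖x‖ < R → infLap ψ x = L := by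
  intro x hx hxR
  obtain rfl : ψ = fun y => psiProfile L b ‖y‖ := funext hψ
  have hA : 0 < b + 3 * L * ‖x‖ := hb x hxR
  have hderiv : ∀ᶠ t in 𝓝 ‖x‖, HasDerivAt (psiProfile L b) ((b + 3 * L * t) ^ ((1:ℝ)/3)) t := by
    have hcont : ContinuousAt (fun t : ℝ => b + 3 * L * t) ‖x‖ := by fun_prop
    filter_upwards [continuousAt_const.eventually_lt hcont hA] with t ht
    exact hasDerivAt_psiProfile hL ht.ne'
  rw [infLap, inner_fderiv_gradient_comp_norm (norm_pos_iff.1 hx) hderiv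
    (hasDerivAt_rpow_affine _ hA.ne')]
  rw [← Real.rpow_natCast, ← Real.rpow_mul hA.le, mul_left_comm, ← Real.rpow_add hA,
    show (1:ℝ)/3 * (2:ℕ) + (1/3 - 1) = 0 by norm_num, Real.rpow_zero]
  ring

theorem stmt13 (n : ℕ) (hn : 2 ≤ n) (R L b : ℝ) (hR : 0 < R) (hL : L ≠ 0)
    (hb : ∀ x : EuclideanSpace ℝ (Fin n), ‖x‖ < R → 0 < b + 3 * L * ‖x‖)
    (ψ : EuclideanSpace ℝ (Fin n) → ℝ)
    (hψ : ∀ x, ψ x = 1 + (1 / (4 * L)) *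
      ((b + 3 * L * ‖x‖) ^ ((4:ℝ)/3) - b ^ ((4:ℝ)/3))) :
    ∀ x : EuclideanSpace ℝ (Fin n), 0 < ‖x‖ → ‖x‖ < R → infLap ψ x = L :=
  stmt13_general n R L b hL hb ψ hψ
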